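/- Under the change of variables u = (3/(16π)) a² e^{2κΦ/3}, v = (3/(16π)) a² e^{-2κΦ/3}, p_u = (4π/(3κ)) (a p_a κ + 3 p_Φ) e^{-2κΦ/3} / a², p_v = (4π/(3κ)) (a p_a κ - 3 p_Φ) e^{2κΦ/3} / a² (with κ > 0 a constant, a > 0), the transformation from (a, Φ, p_a, p_Φ) to (u, v, p_u, p_v) is canonical: {u, p_u} = 1, {v, p_v} = 1, {u, v} = 0, {u, p_v} = 0, {v, p_u} = 0, {p_u, p_v} = 0, where brackets are computed with the canonical structure {a, p_a} = 1, {Φ, p_Φ} = 1. -/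

import Mathlib

/-!
All four null coordinates lie in the family `F = (b + α a p_a + β p_Φ) e^{kΦ} aⁿ`
(`linExpZpow b α β k n`). Writing `W = e^{kΦ} aⁿ`, the partial derivatives of `F` are
`(α p_a W + n F / a, k F, α a W, β W)`, so in a bracket of two members the `a p_a` terms cancel:
`{F, F'} = (n α' + k β') F W' - (n' α + k' β) F' W`.
For the null coordinates these coefficients vanish, except `n α' + k β' = 16π/3` in `{u, p_u}` and
`{v, p_v}`, which cancels the prefactor of `u` and `v` since there `W W' = 1`.
-/

/-- Partial derivative of a phase-space function on ℝ⁴ in the `i`-th coordinate. -/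
noncomputable def pd (i : Fin 4) (F : (Fin 4 → ℝ) → ℝ) (x : Fin 4 → ℝ) : ℝ :=
  fderiv ℝ F x (Pi.single i 1)

/-- Canonical Poisson bracket on the phase space with coordinates
(a, Φ, p_a, p_Φ) = (x 0, x 1, x 2, x 3), so that {a, p_a} = 1 and {Φ, p_Φ} = 1. -/
noncomputable def pb (F G : (Fin 4 → ℝ) → ℝ) (x : Fin 4 → ℝ) : ℝ :=
  pd 0 F x * pd 2 G x + pd 1 F x * pd 3 G x - pd 2 F x * pd 0 G x - pd 3 F x * pd 1 G x

/-- u = (3/(16π)) a² e^{2κΦ/3}. -/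
noncomputable def uF (κ : ℝ) : (Fin 4 → ℝ) → ℝ := fun x =>
  (3 / (16 * Real.pi)) * x 0 ^ 2 * Real.exp (2 * κ * x 1 / 3)

/-- v = (3/(16π)) a² e^{-2κΦ/3}. -/
noncomputable def vF (κ : ℝ) : (Fin 4 → ℝ) → ℝ := fun x =>
  (3 / (16 * Real.pi)) * x 0 ^ 2 * Real.exp (-(2 * κ * x 1 / 3))

/-- p_u = (4π/(3κ)) (a p_a κ + 3 p_Φ) e^{-2κΦ/3} / a². -/
noncomputable def puF (κ : ℝ) : (Fin 4 → ℝ) → ℝ := fun x =>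
  (4 * Real.pi / (3 * κ)) * (x 0 * x 2 * κ + 3 * x 3) * Real.exp (-(2 * κ * x 1 / 3)) / x 0 ^ 2

/-- p_v = (4π/(3κ)) (a p_a κ - 3 p_Φ) e^{2κΦ/3} / a². -/
noncomputable def pvF (κ : ℝ) : (Fin 4 → ℝ) → ℝ := fun x =>
  (4 * Real.pi / (3 * κ)) * (x 0 * x 2 * κ - 3 * x 3) * Real.exp (2 * κ * x 1 / 3) / x 0 ^ 2

open Real

noncomputable def expZpow (k : ℝ) (n : ℤ) (x : Fin 4 → ℝ) : ℝ :=
  exp (k * x 1) * x 0 ^ n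

noncomputable def linExpZpow (b α β k : ℝ) (n : ℤ) (x : Fin 4 → ℝ) : ℝ :=
  (b + α * x 0 * x 2 + β * x 3) * expZpow k n x

lemma pd_eq_of_hasFDerivAt {F : (Fin 4 → ℝ) → ℝ} {L : (Fin 4 → ℝ) →L[ℝ] ℝ} {x : Fin 4 → ℝ}
    (i : Fin 4) (h : HasFDerivAt F L x) : pd i F x = L (Pi.single i 1) := by
  rw [pd, h.fderiv]

section
variable (b α β k : ℝ) (n : ℤ) {x : Fin 4 → ℝ}

lemma pd_linExpZpow (hx : x 0 ≠ 0) (i : Fin 4) :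
    pd i (linExpZpow b α β k n) x =
      ![α * x 2 * expZpow k n x + n * linExpZpow b α β k n x / x 0,
        k * linExpZpow b α β k n x, α * x 0 * expZpow k n x, β * expZpow k n x] i := by
  have hc (i : Fin 4) := hasFDerivAt_apply (𝕜 := ℝ) (F' := fun _ : Fin 4 => ℝ) i x
  have hlin := ((((hc 0).mul (hc 2)).const_mul α).const_add b).add ((hc 3).const_mul β)
  have hexp := ((hc 1).const_mul k).exp
  have hpow := (hasDerivAt_zpow n (x 0) (Or.inl hx)).comp_hasFDerivAt x (hc 0)
  have h := (hlin.mul (hexp.mul hpow)).congr_of_eventuallyEq (f₁ := linExpZpow b α β k n)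
    (.of_forall fun y => by
      simp only [linExpZpow, expZpow, Pi.add_apply, Pi.mul_apply, Function.comp_apply]; ring)
  rw [pd_eq_of_hasFDerivAt i h]
  fin_cases i <;>
    simp only [Fin.isValue, Fin.zero_eta, Fin.mk_one, Fin.reduceFinMk, Pi.mul_apply, Pi.add_apply,
      Function.comp_apply, add_apply, smul_apply,
      ContinuousLinearMap.proj_apply, Pi.single_apply, Fin.reduceEq, if_true, if_false, smul_eq_mul,
      mul_one, mul_zero, add_zero, zero_add, zpow_sub_one₀ hx, linExpZpow, expZpow,
      Matrix.cons_val_zero, Matrix.cons_val_one, Matrix.cons_val] <;>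
    ring

end

section
variable {b α β k b' α' β' k' : ℝ} {n n' : ℤ} {x : Fin 4 → ℝ}

lemma pb_linExpZpow (hx : x 0 ≠ 0) :
    pb (linExpZpow b α β k n) (linExpZpow b' α' β' k' n') x =
      (n * α' + k * β') * linExpZpow b α β k n x * expZpow k' n' x -
        (n' * α + k' * β) * linExpZpow b' α' β' k' n' x * expZpow k n x := by
  simp only [pb, pd_linExpZpow _ _ _ _ _ hx, Matrix.cons_val_zero, Matrix.cons_val_one,
    Matrix.cons_val]
  field_simp
  ring

end

lemma uF_eq (κ : ℝ) : uF κ = linExpZpow (3 / (16 * π)) 0 0 (2 * κ / 3) 2 := by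
  ext x; simp only [uF, linExpZpow, expZpow, zpow_ofNat]; ring_nf

lemma vF_eq (κ : ℝ) : vF κ = linExpZpow (3 / (16 * π)) 0 0 (-(2 * κ / 3)) 2 := by
  ext x; simp only [vF, linExpZpow, expZpow, zpow_ofNat]; ring_nf

lemma puF_eq (κ : ℝ) :
    puF κ = linExpZpow 0 (4 * π / (3 * κ) * κ) (4 * π / κ) (-(2 * κ / 3)) (-2) := by
  ext x; simp only [puF, linExpZpow, expZpow, zpow_neg, zpow_ofNat]; ring_nf

lemma pvF_eq (κ : ℝ) :
    pvF κ = linExpZpow 0 (4 * π / (3 * κ) * κ) (-(4 * π / κ)) (2 * κ / 3) (-2) := by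
  ext x; simp only [pvF, linExpZpow, expZpow, zpow_neg, zpow_ofNat]; ring_nf

/-- the map (a, Φ, p_a, p_Φ) ↦ (u, v, p_u, p_v) is a canonical
transformation: {u, p_u} = 1, {v, p_v} = 1, {u, v} = {u, p_v} = {v, p_u} = {p_u, p_v} = 0. -/
theorem flrw_null_coordinates_canonical (κ : ℝ) (hκ : 0 < κ) :
    ∀ x : Fin 4 → ℝ, 0 < x 0 →
      pb (uF κ) (puF κ) x = 1 ∧ pb (vF κ) (pvF κ) x = 1 ∧
        pb (uF κ) (vF κ) x = 0 ∧ pb (uF κ) (pvF κ) x = 0 ∧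
        pb (vF κ) (puF κ) x = 0 ∧ pb (puF κ) (pvF κ) x = 0 := by
  intro x hx
  rw [uF_eq, vF_eq, puF_eq, pvF_eq]
  simp only [pb_linExpZpow hx.ne', linExpZpow, expZpow, neg_mul, exp_neg, zpow_neg, zpow_ofNat]
  refine ⟨?_, ?_, ?_, ?_, ?_, ?_⟩ <;> field_simp <;> ring
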